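/- arXiv:1709.07522 — 3 statements merged into one kernel-verified Lean document; each statement's English description precedes it below -/
import Mathlib

section
/- Let μ be a Borel probability measure on 𝕋 that is singular with respect to Lebesgue measure. Then the Cauchy transform μ₊(z) = ∫_𝕋 1/(1 − z e^{2πix}) dμ(x) is nonvanishing on the open unit disk: μ₊(z) ≠ 0 for all z ∈ ℂ with |z| < 1. -/
open MeasureTheory Complex Filter Finset

noncomputable section

lemma re_inv_gt_half (w : ℂ) (hw : ‖w‖ < 1) : 1/2 < ((1 - w)⁻¹).re := by
  have hsq : Complex.normSq w < 1 := by
    rw [Complex.normSq_eq_norm_sq]; nlinarith [norm_nonneg w]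
  have hpos : 0 < Complex.normSq (1 - w) := by
    rw [Complex.normSq_pos, sub_ne_zero]
    intro h
    rw [← h] at hw; simp at hw
  rw [Complex.inv_re, lt_div_iff₀ hpos]
  have h1 : Complex.normSq (1 - w) = 1 - 2 * w.re + Complex.normSq w := by
    simp [Complex.normSq_apply, Complex.sub_re, Complex.sub_im]; ring
  simp only [Complex.sub_re, Complex.one_re]
  rw [h1]
  simp [Complex.normSq_apply] at hsq ⊢
  nlinarith

/-- The Cauchy transform of `μ`: `μ₊(z) = ∫ 1/(1 - z e^{2πix}) dμ(x)`. -/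
def cauchyT (μ : Measure ℝ) (z : ℂ) : ℂ :=
  ∫ x, (1 - z * Complex.exp (2 * Real.pi * Complex.I * x))⁻¹ ∂μ

/-- for a singular Borel probability measure `μ` on `𝕋`, the Cauchy
transform `μ₊` is nonvanishing on the open unit disk. -/
theorem cauchy_transform_nonvanishing
    (μ : Measure ℝ) [IsProbabilityMeasure μ]
    (hT : μ (Set.Ioc (-(1 : ℝ) / 2) (1 / 2))ᶜ = 0)
    (hsing : μ ⟂ₘ (volume : Measure ℝ)) :
    ∀ z : ℂ, ‖z‖ < 1 → cauchyT μ z ≠ 0 := by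
  intro z hz
  set f : ℝ → ℂ := fun x => (1 - z * Complex.exp (2 * Real.pi * Complex.I * x))⁻¹ with hf
  have habs : ∀ x : ℝ, ‖z * Complex.exp (2 * Real.pi * Complex.I * x)‖ < 1 := by
    intro x
    rw [norm_mul, Complex.norm_exp]
    have : (2 * (Real.pi : ℂ) * Complex.I * x).re = 0 := by
      simp [Complex.mul_re, Complex.mul_im]
    rw [this, Real.exp_zero, mul_one]
    exact hz
  have hne : ∀ x : ℝ, (1 : ℂ) - z * Complex.exp (2 * Real.pi * Complex.I * x) ≠ 0 := by
    intro x h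
    have := habs x
    rw [sub_eq_zero] at h
    rw [← h] at this; simp at this
  have hcont : Continuous f := by
    apply Continuous.inv₀
    · continuity
    · exact fun x => hne x
  have hbound : ∀ x : ℝ, ‖f x‖ ≤ (1 - ‖z‖)⁻¹ := by
    intro x
    have h1 : (1 : ℝ) - ‖z‖ ≤ ‖1 - z * Complex.exp (2 * Real.pi * Complex.I * x)‖ := by
      have := norm_sub_norm_le (1:ℂ) (z * Complex.exp (2 * Real.pi * Complex.I * x))
      simp only [norm_one] at this
      have h2 : ‖z * Complex.exp (2 * Real.pi * Complex.I * x)‖ = ‖z‖ := by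
        rw [norm_mul, Complex.norm_exp]
        have : (2 * (Real.pi : ℂ) * Complex.I * x).re = 0 := by
          simp [Complex.mul_re, Complex.mul_im]
        rw [this, Real.exp_zero, mul_one]
      linarith [this, h2 ▸ this]
    simp only [hf, norm_inv]
    apply inv_anti₀ (by linarith) h1
  have hint : Integrable f μ := by
    apply Integrable.mono' (integrable_const ((1 - ‖z‖)⁻¹))
    · exact hcont.aestronglyMeasurable
    · exact Filter.Eventually.of_forall hbound
  have hre : (cauchyT μ z).re = ∫ x, (f x).re ∂μ := by
    unfold cauchyT
    exact (integral_re hint).symm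
  have hge : 1/2 ≤ ∫ x, (f x).re ∂μ := by
    have : (1/2 : ℝ) = ∫ _x, (1/2 : ℝ) ∂μ := by simp
    rw [this]
    apply integral_mono (integrable_const _) hint.re
    intro x
    exact le_of_lt (re_inv_gt_half _ (habs x))
  intro h0
  rw [h0] at hre
  simp at hre
  rw [← hre] at hge
  norm_num at hge
end
end

section
/- Let μ be a singular Borel probability measure on 𝕋, (α_n)_{n≥0} the Taylor coefficients of 1/μ₊, and g_n(x) = ∑_{j=0}^{n} conj(α_{n−j}) e^{2πijx} ∈ L²(μ). Then for every f ∈ L²(μ) and every z in the open unit disk 𝔻, (1/μ₊(z)) · ∫_𝕋 f(x)/(1 − z e^{−2πix}) dμ(x) = ∑_{n=0}^{∞} ⟨f, g_n⟩ z^n, the series converging for |z| < 1. -/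
open MeasureTheory Complex Filter Finset

noncomputable section

/-- The inner product of `L²(μ)`: `⟪f, g⟫ = ∫ f conj(g) dμ`. -/
def inner2 (μ : Measure ℝ) (f g : ℝ → ℂ) : ℂ :=
  ∫ x, f x * (starRingEnd ℂ) (g x) ∂μ

/-- `g_n(x) = ∑_{j=0}^n conj(α_{n-j}) e^{2πijx}`. -/
def gfun (α : ℕ → ℂ) (n : ℕ) (x : ℝ) : ℂ :=
  ∑ j ∈ Finset.range (n + 1),
    (starRingEnd ℂ) (α (n - j)) * Complex.exp (2 * Real.pi * Complex.I * j * x)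

/-- The Fourier transform of `f ∈ L²(μ)`: `f̂(z) = ∫ f(x) e^{-2πixz} dμ(x)`. -/
def ft (μ : Measure ℝ) (f : ℝ → ℂ) (z : ℂ) : ℂ :=
  ∫ x, f x * Complex.exp (-(2 * Real.pi * Complex.I) * x * z) ∂μ

/-- helper -/
lemma exp_norm_one (x : ℝ) (c : ℕ) : ‖Complex.exp (-(2 * Real.pi * Complex.I) * x * c)‖ = 1 := by
  rw [Complex.norm_exp]
  have : (-(2 * (Real.pi:ℂ) * Complex.I) * x * c).re = 0 := by
    simp [Complex.mul_re, Complex.mul_im]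
  rw [this, Real.exp_zero]


/-- the normalized Cauchy transform of `f ∈ L²(μ)` has power series
`(1/μ₊(z)) ∫ f(x)/(1 − z e^{−2πix}) dμ(x) = ∑_{n≥0} ⟨f, g_n⟩ zⁿ` on the unit disk. -/
theorem normalized_cauchy_transform_series
    (μ : Measure ℝ) [IsProbabilityMeasure μ]
    (hT : μ (Set.Ioc (-(1 : ℝ) / 2) (1 / 2))ᶜ = 0)
    (hsing : μ ⟂ₘ (volume : Measure ℝ))
    (hatom : μ {(1 : ℝ) / 2} = 0)
    (α : ℕ → ℂ)
    (hα : ∀ z ∈ Metric.ball (0 : ℂ) 1, HasSum (fun n => α n * z ^ n) (cauchyT μ z)⁻¹)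
    (f : ℝ → ℂ) (hf : MemLp f 2 μ) :
    ∀ z ∈ Metric.ball (0 : ℂ) 1,
      HasSum (fun n => inner2 μ f (gfun α n) * z ^ n)
        ((cauchyT μ z)⁻¹ *
          ∫ x, f x * (1 - z * Complex.exp (-(2 * Real.pi * Complex.I) * x))⁻¹ ∂μ) := by
  intro z hz
  have hz1 : ‖z‖ < 1 := by simpa using hz
  have hfi : Integrable f μ := hf.integrable one_le_two
  set a : ℕ → ℂ := fun n => α n * z ^ n with ha
  set c : ℕ → ℂ := fun j => ∫ x, f x * Complex.exp (-(2 * Real.pi * Complex.I) * x * j) ∂μ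
    with hc
  set b : ℕ → ℂ := fun n => c n * z ^ n with hb
  -- integrability of f times exponentials
  have hint : ∀ j : ℕ, Integrable (fun x => f x * Complex.exp (-(2 * Real.pi * Complex.I) * x * j)) μ := by
    intro j
    have : Integrable (fun x : ℝ => Complex.exp (-(2 * Real.pi * Complex.I) * x * j) * f x) μ := by
      have hbdd : ∀ x : ℝ, ‖Complex.exp (-(2 * Real.pi * Complex.I) * (x:ℂ) * (j:ℂ))‖ ≤ 1 :=
        fun x => le_of_eq (exp_norm_one x j)
      refine hfi.bdd_mul (c := 1) ?_ (Eventually.of_forall hbdd)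
      exact (Complex.continuous_exp.comp (by continuity)).aestronglyMeasurable
    simpa [mul_comm] using this
  -- Step A : HasSum b (∫ f/(1-z e^{-2πix}))
  have hA : HasSum b (∫ x, f x * (1 - z * Complex.exp (-(2 * Real.pi * Complex.I) * x))⁻¹ ∂μ) := by
    set F : ℕ → ℝ → ℂ := fun n x => f x * (z * Complex.exp (-(2 * Real.pi * Complex.I) * x)) ^ n
      with hF
    have hFeq : ∀ n x, F n x = (f x * Complex.exp (-(2 * Real.pi * Complex.I) * x * n)) * z ^ n := by
      intro n x
      simp only [hF]
      have : Complex.exp (-(2 * Real.pi * Complex.I) * x * n)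
          = Complex.exp (-(2 * Real.pi * Complex.I) * x) ^ n := by
        rw [← Complex.exp_nat_mul]; ring_nf
      rw [this, mul_pow]; ring
    have hFint : ∀ n, Integrable (F n) μ := by
      intro n
      have := (hint n).mul_const (z ^ n)
      refine this.congr (Eventually.of_forall fun x => (hFeq n x).symm)
    have hFnorm : ∀ n, (∫ x, ‖F n x‖ ∂μ) = (∫ x, ‖f x‖ ∂μ) * ‖z‖ ^ n := by
      intro n
      rw [← integral_mul_const]
      congr 1; funext x
      rw [hFeq n x, norm_mul, norm_mul, exp_norm_one, norm_pow, mul_one]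
    have hFsum : Summable fun n => ∫ x, ‖F n x‖ ∂μ := by
      simp_rw [hFnorm]
      exact (summable_geometric_of_lt_one (norm_nonneg z) hz1).mul_left _
    have := MeasureTheory.hasSum_integral_of_summable_integral_norm hFint hFsum
    have htsum : ∀ x : ℝ, (∑' n, F n x) = f x * (1 - z * Complex.exp (-(2 * Real.pi * Complex.I) * x))⁻¹ := by
      intro x
      have hlt : ‖z * Complex.exp (-(2 * Real.pi * Complex.I) * x)‖ < 1 := by
        rw [norm_mul]
        have : ‖Complex.exp (-(2 * Real.pi * Complex.I) * x)‖ = 1 := by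
          simpa using exp_norm_one x 1
        rw [this, mul_one]; exact hz1
      exact ((hasSum_geometric_of_norm_lt_one hlt).mul_left (f x)).tsum_eq
    have hbeq : ∀ n, (∫ x, F n x ∂μ) = b n := by
      intro n
      simp_rw [hFeq]
      rw [integral_mul_const]
    refine HasSum.congr_fun ?_ (fun n => (hbeq n).symm)
    · simpa only [funext htsum] using this
  -- Step B : summable norms of a
  have hans : Summable fun n => ‖a n‖ := by
    set r : ℝ := (1 + ‖z‖) / 2 with hr
    have hzr : ‖z‖ < r := by rw [hr]; linarith
    have hr0 : 0 < r := lt_of_le_of_lt (norm_nonneg z) hzr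
    have hr1 : r < 1 := by rw [hr]; linarith
    have hrball : (r : ℂ) ∈ Metric.ball (0 : ℂ) 1 := by
      simp [Complex.norm_real, abs_of_pos hr0, hr1]
    have hs : Summable fun n => α n * (r : ℂ) ^ n := (hα _ hrball).summable
    have htend : Tendsto (fun n => ‖α n * (r : ℂ) ^ n‖) atTop (nhds 0) := by
      simpa using (hs.tendsto_atTop_zero.norm)
    obtain ⟨C, hC⟩ := htend.bddAbove_range
    have hCmem : ∀ n, ‖α n * (r : ℂ) ^ n‖ ≤ C := fun n => hC (Set.mem_range_self n)
    have hkey : ∀ n : ℕ, ‖a n‖ ≤ C * (‖z‖ / r) ^ n := by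
      intro n
      have h1 : ‖a n‖ = ‖α n‖ * ‖z‖ ^ n := by rw [ha]; simp [norm_mul]
      have h2 : ‖α n * (r : ℂ) ^ n‖ = ‖α n‖ * r ^ n := by
        simp [norm_mul, abs_of_pos hr0]
      have h3 : ‖α n‖ * r ^ n ≤ C := by rw [← h2]; exact hCmem n
      rw [h1]
      have hrne : r ≠ 0 := ne_of_gt hr0
      have : ‖α n‖ * ‖z‖ ^ n = (‖α n‖ * r ^ n) * (‖z‖ / r) ^ n := by
        rw [mul_assoc, ← mul_pow, mul_comm r, div_mul_cancel₀ _ hrne]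
      rw [this]
      have hnn : (0:ℝ) ≤ (‖z‖ / r) ^ n := pow_nonneg (div_nonneg (norm_nonneg z) hr0.le) n
      exact mul_le_mul_of_nonneg_right h3 hnn
    refine Summable.of_nonneg_of_le (fun n => norm_nonneg _) hkey ?_
    exact (summable_geometric_of_lt_one (div_nonneg (norm_nonneg z) hr0.le)
      ((div_lt_one hr0).2 hzr)).mul_left C
  -- Step C : summable norms of b
  have hbns : Summable fun n => ‖b n‖ := by
    have hkey : ∀ n : ℕ, ‖b n‖ ≤ (∫ x, ‖f x‖ ∂μ) * ‖z‖ ^ n := by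
      intro n
      rw [hb]
      simp only [norm_mul, norm_pow]
      have h1 : ‖c n‖ ≤ ∫ x, ‖f x‖ ∂μ := by
        refine le_trans (norm_integral_le_integral_norm _) ?_
        refine le_of_eq (integral_congr_ae (Eventually.of_forall fun x => ?_))
        show ‖f x * Complex.exp (-(2 * Real.pi * Complex.I) * (x:ℂ) * (n:ℂ))‖ = ‖f x‖
        rw [norm_mul, exp_norm_one x n, mul_one]
      exact mul_le_mul_of_nonneg_right h1 (pow_nonneg (norm_nonneg z) n)
    refine Summable.of_nonneg_of_le (fun n => norm_nonneg _) hkey ?_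
    exact (summable_geometric_of_lt_one (norm_nonneg z) hz1).mul_left _
  -- Cauchy product
  have hcp : HasSum (fun n => ∑ k ∈ Finset.range (n + 1), a k * b (n - k))
      ((∑' n, a n) * (∑' n, b n)) := hasSum_sum_range_mul_of_summable_norm hans hbns
  rw [(hα z hz).tsum_eq, hA.tsum_eq] at hcp
  -- identify coefficients
  refine HasSum.congr_fun hcp (fun n => ?_)
  -- inner2 μ f (gfun α n) = ∑ j in range (n+1), α (n-j) * c j
  have hinner : inner2 μ f (gfun α n) = ∑ j ∈ Finset.range (n + 1), α (n - j) * c j := by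
    rw [inner2]
    have hconj : ∀ x : ℝ, (starRingEnd ℂ) (gfun α n x)
        = ∑ j ∈ Finset.range (n + 1), α (n - j) * Complex.exp (-(2 * Real.pi * Complex.I) * x * j) := by
      intro x
      rw [gfun, map_sum]
      refine Finset.sum_congr rfl fun j _ => ?_
      rw [map_mul, Complex.conj_conj]
      congr 1
      rw [← Complex.exp_conj]
      congr 1
      simp only [map_mul, map_ofNat, Complex.conj_ofReal, Complex.conj_I, map_natCast]
      ring
    have : ∀ x : ℝ, f x * (starRingEnd ℂ) (gfun α n x)
        = ∑ j ∈ Finset.range (n + 1), α (n - j) * (f x * Complex.exp (-(2 * Real.pi * Complex.I) * x * j)) := by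
      intro x
      rw [hconj, Finset.mul_sum]
      refine Finset.sum_congr rfl fun j _ => by ring
    rw [integral_congr_ae (Eventually.of_forall this),
      integral_finset_sum _ (fun j _ => ((hint j).const_mul _))]
    refine Finset.sum_congr rfl fun j _ => ?_
    rw [integral_const_mul]
  rw [hinner, Finset.sum_mul]
  rw [← Finset.sum_range_reflect (fun k => a k * b (n - k)) (n + 1)]
  refine Finset.sum_congr rfl fun j hj => ?_
  rw [Finset.mem_range] at hj
  have hj' : j ≤ n := Nat.lt_succ_iff.mp hj
  have h1 : n + 1 - 1 - j = n - j := by omega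
  rw [h1]
  have h2 : n - (n - j) = j := by omega
  rw [ha, hb, h2]
  have h3 : z ^ (n - j) * z ^ j = z ^ n := by
    rw [← pow_add]; congr 1; omega
  ring_nf
  rw [← h3]; ring
end
end

section
/- Let μ be a Borel probability measure on 𝕋 = (−1/2, 1/2] with μ({1/2}) = 0, and let f ∈ L²(μ). Then the entire function f̂(z) = ∫_𝕋 f(x) e^{−2πixz} dμ(x) satisfies |f̂(z)| ≤ ε(|z|) e^{π|z|} where ε(r) = o(1) as r → ∞; that is, lim_{r→∞} sup_{|z|=r} |f̂(z)| e^{−πr} = 0. -/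
open MeasureTheory Complex Filter Finset

noncomputable section

/-- Lemma 5: for `f ∈ L²(μ)`, the transform `f̂` satisfies
`|f̂(z)| ≤ ε(|z|) e^{π|z|}` with `ε(r) = o(1)`; i.e.
`sup_{|z|=r} |f̂(z)| e^{−πr} → 0` as `r → ∞`. -/
theorem fourier_transform_growth_estimate
    (μ : Measure ℝ) [IsProbabilityMeasure μ]
    (hT : μ (Set.Ioc (-(1 : ℝ) / 2) (1 / 2))ᶜ = 0)
    (hatom : μ {(1 : ℝ) / 2} = 0)
    (f : ℝ → ℂ) (hf : MemLp f 2 μ) :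
    Tendsto (fun r : ℝ =>
        (⨆ z ∈ Metric.sphere (0 : ℂ) r, ‖ft μ f z‖) * Real.exp (-(Real.pi * r)))
      atTop (nhds 0) := by
  have hpi : (0:ℝ) < Real.pi := Real.pi_pos
  have hf1 : Integrable f μ := hf.integrable one_le_two
  have hfn : Integrable (fun x => ‖f x‖) μ := hf1.norm
  have hae1 : ∀ᵐ x ∂μ, x ∈ Set.Ioc (-(1:ℝ)/2) (1/2) := mem_ae_iff.mpr hT
  have hae2 : ∀ᵐ x ∂μ, x ≠ (1:ℝ)/2 := by
    rw [ae_iff]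
    convert hatom using 2
    ext x; simp
  have haele : ∀ᵐ x ∂μ, |x| ≤ 1/2 := by
    filter_upwards [hae1] with x hx
    rw [abs_le]; exact ⟨by linarith [hx.1], hx.2⟩
  have haelt : ∀ᵐ x ∂μ, |x| < 1/2 := by
    filter_upwards [hae1, hae2] with x hx hne
    rw [abs_lt]; exact ⟨by linarith [hx.1], lt_of_le_of_ne hx.2 hne⟩
  set G : ℝ → ℝ := fun r => ∫ x, ‖f x‖ * Real.exp ((2 * Real.pi * |x| - Real.pi) * r) ∂μ with hG
  have hmeas : ∀ r : ℝ, AEStronglyMeasurable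
      (fun x => ‖f x‖ * Real.exp ((2 * Real.pi * |x| - Real.pi) * r)) μ := by
    intro r
    exact hf.1.norm.mul (Continuous.aestronglyMeasurable (by fun_prop))
  have hGtend : Tendsto G atTop (nhds 0) := by
    have h := MeasureTheory.tendsto_integral_filter_of_dominated_convergence (μ := μ)
      (F := fun (r : ℝ) (x : ℝ) => ‖f x‖ * Real.exp ((2 * Real.pi * |x| - Real.pi) * r))
      (f := fun _ => (0:ℝ)) (bound := fun x => ‖f x‖) (l := atTop)
      (Eventually.of_forall hmeas) ?_ hfn ?_
    · simpa using h
    · filter_upwards [eventually_ge_atTop (0:ℝ)] with r hr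
      filter_upwards [haele] with x hx
      rw [Real.norm_eq_abs, _root_.abs_of_nonneg (by positivity)]
      have h1 : (2 * Real.pi * |x| - Real.pi) * r ≤ 0 :=
        mul_nonpos_of_nonpos_of_nonneg (by nlinarith [abs_nonneg x]) hr
      exact mul_le_of_le_one_right (norm_nonneg _) (Real.exp_le_one_iff.mpr h1)
    · filter_upwards [haelt] with x hx
      have hc : 2 * Real.pi * |x| - Real.pi < 0 := by nlinarith [abs_nonneg x]
      have h2 : Tendsto (fun r : ℝ => (2 * Real.pi * |x| - Real.pi) * r) atTop atBot :=
        (tendsto_const_mul_atBot_of_neg hc).mpr tendsto_id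
      have h3 := Real.tendsto_exp_atBot.comp h2
      simpa using h3.const_mul ‖f x‖
  have key : ∀ r : ℝ, 0 ≤ r →
      (⨆ z ∈ Metric.sphere (0:ℂ) r, ‖ft μ f z‖) * Real.exp (-(Real.pi*r)) ≤ G r := by
    intro r hr
    have hBm : AEStronglyMeasurable (fun x => ‖f x‖ * Real.exp (2 * Real.pi * |x| * r)) μ :=
      hf.1.norm.mul (Continuous.aestronglyMeasurable (by fun_prop))
    have hB : Integrable (fun x => ‖f x‖ * Real.exp (2 * Real.pi * |x| * r)) μ := by
      refine (hfn.mul_const (Real.exp (Real.pi*r))).mono' hBm ?_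
      filter_upwards [haele] with x hx
      rw [Real.norm_eq_abs, _root_.abs_of_nonneg (by positivity)]
      have h5 : 2 * Real.pi * |x| ≤ Real.pi := by nlinarith
      exact mul_le_mul_of_nonneg_left (Real.exp_le_exp.mpr
        (mul_le_mul_of_nonneg_right h5 hr)) (norm_nonneg _)
    have hBnn : 0 ≤ ∫ x, ‖f x‖ * Real.exp (2 * Real.pi * |x| * r) ∂μ :=
      integral_nonneg fun x => by positivity
    have hsup : (⨆ z ∈ Metric.sphere (0:ℂ) r, ‖ft μ f z‖) ≤
        ∫ x, ‖f x‖ * Real.exp (2 * Real.pi * |x| * r) ∂μ := by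
      refine Real.iSup_le (fun z => Real.iSup_le (fun hz => ?_) hBnn) hBnn
      have hzr : ‖z‖ = r := by simpa using hz
      refine norm_integral_le_of_norm_le hB (Eventually.of_forall fun x => ?_)
      rw [norm_mul, Complex.norm_exp]
      refine mul_le_mul_of_nonneg_left (Real.exp_le_exp.mpr ?_) (norm_nonneg _)
      have hre : (-(2 * ↑Real.pi * Complex.I) * ↑x * z).re = 2 * Real.pi * x * z.im := by
        simp [Complex.mul_re, Complex.mul_im]
      rw [hre]
      have h4 : x * z.im ≤ |x| * r := by
        calc x * z.im ≤ |x * z.im| := le_abs_self _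
          _ = |x| * |z.im| := abs_mul _ _
          _ ≤ |x| * r := by
              refine mul_le_mul_of_nonneg_left ?_ (abs_nonneg x)
              rw [← hzr]; exact Complex.abs_im_le_norm z
      nlinarith
    calc (⨆ z ∈ Metric.sphere (0:ℂ) r, ‖ft μ f z‖) * Real.exp (-(Real.pi*r))
        ≤ (∫ x, ‖f x‖ * Real.exp (2 * Real.pi * |x| * r) ∂μ) * Real.exp (-(Real.pi*r)) :=
          mul_le_mul_of_nonneg_right hsup (Real.exp_nonneg _)
      _ = G r := by
          rw [hG, ← integral_mul_const]
          refine integral_congr_ae (Eventually.of_forall fun x => ?_)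
          simp only [mul_assoc, ← Real.exp_add]
          congr 2
          ring
  refine tendsto_of_tendsto_of_tendsto_of_le_of_le' tendsto_const_nhds hGtend ?_ ?_
  · filter_upwards with r
    exact mul_nonneg (Real.iSup_nonneg fun z => Real.iSup_nonneg fun _ =>
      norm_nonneg _) (Real.exp_nonneg _)
  · filter_upwards [eventually_ge_atTop (0:ℝ)] with r hr using key r hr
end
end
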